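/- arXiv:2107.08676 — 2 statements merged into one kernel-verified Lean document; each statement's English description precedes it below -/
import Mathlib

section
/- Let f be an n-variable Boolean function and t ∈ [n]. Then t-inf(f) ≥ (4t/n)·Var(f). Moreover, equality holds when t = n. -/
/-!
Expanding the autocorrelation in the Walsh basis turns `inf_f(T)` into the Walsh mass
`Σ W_f(u)²` over the `u` whose support meets `T`. Averaging over the `t`-sets `T` gives
`t-inf(f) = Σ_u W_f(u)² (1 - C(n - wt u, t) / C(n, t))`. The weight vanishes at `u = 0` and is
at least `t / n` (exactly `1` when `t = n`) elsewhere, while by Parseval the Walsh mass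
off `0` is `1 - W_f(0)² = 4 Var(f)`.
-/

open Finset

namespace BF

/-- Hamming weight of a vector in `F_2^n`. -/
def wt {n : ℕ} (a : Fin n → ZMod 2) : ℕ := (univ.filter fun i => a i ≠ 0).card

/-- Normalised Walsh transform `W_f(a) = 2^{-n} Σ_x (-1)^{f(x) ⊕ ⟨x,a⟩}`. -/
noncomputable def walsh {n : ℕ} (f : (Fin n → ZMod 2) → ZMod 2) (a : Fin n → ZMod 2) : ℝ :=
  (1 / 2 ^ n) * ∑ x : Fin n → ZMod 2, (-1 : ℝ) ^ (f x + ∑ i, x i * a i).val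

/-- Normalised auto-correlation `C_f(a) = 2^{-n} Σ_x (-1)^{f(x) ⊕ f(x ⊕ a)}`. -/
noncomputable def autocorr {n : ℕ} (f : (Fin n → ZMod 2) → ZMod 2) (a : Fin n → ZMod 2) : ℝ :=
  (1 / 2 ^ n) * ∑ x : Fin n → ZMod 2, (-1 : ℝ) ^ (f x + f (x + a)).val

/-- Influence of the set of variables `T` on `f`:
`inf_f(T) = 1 - 2^{-#T} Σ_{a ≤ χ_T} C_f(a)`. -/
noncomputable def influence {n : ℕ} (f : (Fin n → ZMod 2) → ZMod 2) (T : Finset (Fin n)) : ℝ :=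
  1 - (1 / 2 ^ T.card) *
    ∑ a ∈ univ.filter (fun a : Fin n → ZMod 2 => ∀ i, a i ≠ 0 → i ∈ T), autocorr f a

/-- Total influence `t-inf(f) = (Σ_{#T = t} inf_f(T)) / C(n,t)`. -/
noncomputable def totalInf {n : ℕ} (f : (Fin n → ZMod 2) → ZMod 2) (t : ℕ) : ℝ :=
  (∑ T ∈ univ.filter (fun T : Finset (Fin n) => T.card = t), influence f T) / (n.choose t)

/-- `p̂_f(k) = Σ_{wt(u) = k} (W_f(u))²`. -/
noncomputable def pHat {n : ℕ} (f : (Fin n → ZMod 2) → ZMod 2) (k : ℕ) : ℝ :=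
  ∑ u ∈ univ.filter (fun u : Fin n → ZMod 2 => wt u = k), (walsh f u) ^ 2

/-- Expectation of `f` over a uniform input. -/
noncomputable def expectation {n : ℕ} (f : (Fin n → ZMod 2) → ZMod 2) : ℝ :=
  ((univ.filter fun x : Fin n → ZMod 2 => f x = 1).card : ℝ) / 2 ^ n

/-- Variance of `f`: `Var(f) = E(f)(1 - E(f))`. -/
noncomputable def variance {n : ℕ} (f : (Fin n → ZMod 2) → ZMod 2) : ℝ :=
  expectation f * (1 - expectation f)

lemma zmod_two_eq_zero_or_eq_one (c : ZMod 2) : c = 0 ∨ c = 1 := by decide +revert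

lemma sum_zmod_two {M : Type*} [AddCommMonoid M] (g : ZMod 2 → M) : ∑ b, g b = g 0 + g 1 :=
  Fin.sum_univ_two g

noncomputable def signChar : AddChar (ZMod 2) ℝ where
  toFun c := (-1) ^ c.val
  map_zero_eq_one' := by simp
  map_add_eq_mul' a b := by rw [ZMod.val_add, ← pow_add, ← neg_one_pow_eq_pow_mod_two]

lemma signChar_apply (c : ZMod 2) : signChar c = (-1) ^ c.val := rfl

lemma signChar_eq_one_sub_two_mul (c : ZMod 2) :
    signChar c = 1 - 2 * if c = 1 then 1 else 0 := by
  rcases zmod_two_eq_zero_or_eq_one c with rfl | rfl <;> norm_num [signChar_apply, ZMod.val_one]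

lemma signChar_sum {ι : Type*} (s : Finset ι) (g : ι → ZMod 2) :
    signChar (∑ i ∈ s, g i) = ∏ i ∈ s, signChar (g i) := by
  classical
  induction s using Finset.induction_on with
  | empty => simp
  | insert i s hi ih => rw [sum_insert hi, prod_insert hi, AddChar.map_add_eq_mul, ih]

lemma sum_signChar_mul (c : ZMod 2) : ∑ b, signChar (c * b) = if c = 0 then 2 else 0 := by
  rcases zmod_two_eq_zero_or_eq_one c with rfl | rfl <;>
    norm_num [sum_zmod_two, signChar_apply, ZMod.val_one]

section Orthogonality

variable {ι : Type*} [Fintype ι] [DecidableEq ι]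

lemma sum_signChar_dotProduct_subcube (T : Finset ι)
    [DecidablePred fun a : ι → ZMod 2 => ∀ i, a i ≠ 0 → i ∈ T] (u : ι → ZMod 2) :
    ∑ a ∈ univ.filter (fun a : ι → ZMod 2 => ∀ i, a i ≠ 0 → i ∈ T), signChar (u ⬝ᵥ a) =
      if ∀ i ∈ T, u i = 0 then 2 ^ #T else 0 := by
  have hcube : univ.filter (fun a : ι → ZMod 2 => ∀ i, a i ≠ 0 → i ∈ T) =
      Fintype.piFinset fun i => if i ∈ T then univ else {0} := by
    ext a
    simp only [mem_filter, mem_univ, true_and, Fintype.mem_piFinset]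
    refine forall_congr' fun i => ?_
    split_ifs with hi <;> simp [hi]
  have hfactor : ∀ i, ∑ b ∈ (if i ∈ T then univ else {0}), signChar (u i * b) =
      if i ∈ T then (if u i = 0 then 2 else 0) else 1 := by
    intro i
    by_cases hi : i ∈ T <;> simp [hi, sum_signChar_mul]
  simp only [hcube, dotProduct, signChar_sum]
  rw [← prod_univ_sum (fun i => if i ∈ T then univ else {0}) fun i b => signChar (u i * b)]
  simp only [hfactor, prod_ite_mem, univ_inter, prod_ite_zero, prod_const]

lemma sum_signChar_dotProduct (u : ι → ZMod 2) :
    ∑ a, signChar (u ⬝ᵥ a) = if u = 0 then 2 ^ Fintype.card ι else 0 := by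
  simpa [funext_iff] using sum_signChar_dotProduct_subcube univ u

end Orthogonality

section Spectrum

variable {n : ℕ} (f : (Fin n → ZMod 2) → ZMod 2)

lemma walsh_eq_sum_signChar (u : Fin n → ZMod 2) :
    walsh f u = (1 / 2 ^ n) * ∑ x, signChar (f x + x ⬝ᵥ u) := rfl

lemma autocorr_eq_sum_signChar (a : Fin n → ZMod 2) :
    autocorr f a = (1 / 2 ^ n) * ∑ x, signChar (f x + f (x + a)) := rfl

lemma card_cube : Fintype.card (Fin n → ZMod 2) = 2 ^ n := by simp

lemma autocorr_zero : autocorr f 0 = 1 := by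
  simp [autocorr_eq_sum_signChar, CharTwo.add_self_eq_zero]

lemma walsh_sq_mul_signChar (u a : Fin n → ZMod 2) :
    walsh f u ^ 2 * signChar (u ⬝ᵥ a) =
      (1 / 2 ^ n) ^ 2 * ∑ x, ∑ y, signChar (f x + f y) * signChar ((x + y + a) ⬝ᵥ u) := by
  rw [walsh_eq_sum_signChar, mul_pow, sq (∑ x, _), sum_mul_sum, mul_assoc, sum_mul]
  congr 1
  refine sum_congr rfl fun x _ => ?_
  rw [sum_mul]
  refine sum_congr rfl fun y _ => ?_
  simp only [← AddChar.map_add_eq_mul, add_dotProduct, dotProduct_comm u a]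
  ring_nf

lemma add_add_eq_zero_iff {x y a : Fin n → ZMod 2} : x + y + a = 0 ↔ y = x + a := by
  rw [add_right_comm, add_eq_zero_iff_eq_neg', ZModModule.neg_eq_self]

/-- Wiener–Khinchin. -/
lemma autocorr_eq_sum_walsh_sq (a : Fin n → ZMod 2) :
    autocorr f a = ∑ u, walsh f u ^ 2 * signChar (u ⬝ᵥ a) := by
  have hinner : ∀ x : Fin n → ZMod 2,
      ∑ u, ∑ y, signChar (f x + f y) * signChar ((x + y + a) ⬝ᵥ u) =
        signChar (f x + f (x + a)) * 2 ^ n := by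
    intro x
    rw [sum_comm]
    simp only [← mul_sum, sum_signChar_dotProduct, add_add_eq_zero_iff, Fintype.card_fin,
      mul_ite, mul_zero, sum_ite_eq', mem_univ, if_true]
  simp only [walsh_sq_mul_signChar, ← mul_sum]
  rw [sum_comm]
  simp only [hinner, ← sum_mul, autocorr_eq_sum_signChar]
  field_simp

lemma sum_walsh_sq : ∑ u, walsh f u ^ 2 = 1 := by
  simpa [autocorr_zero] using (autocorr_eq_sum_walsh_sq f 0).symm

end Spectrum

lemma wt_eq_zero_iff {n : ℕ} {u : Fin n → ZMod 2} : wt u = 0 ↔ u = 0 := by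
  simp [wt, filter_eq_empty_iff, funext_iff]

lemma one_le_wt {n : ℕ} {u : Fin n → ZMod 2} (hu : u ≠ 0) : 1 ≤ wt u :=
  Nat.one_le_iff_ne_zero.2 (wt_eq_zero_iff.not.2 hu)

lemma card_filter_card_eq (n t : ℕ) :
    #(univ.filter fun T : Finset (Fin n) => #T = t) = n.choose t := by
  have hslice : univ.filter (fun T : Finset (Fin n) => #T = t) = powersetCard t univ := by
    ext; simp
  rw [hslice, card_powersetCard, card_univ, Fintype.card_fin]

lemma card_filter_card_eq_and_forall_eq_zero {n : ℕ} (t : ℕ) (u : Fin n → ZMod 2) :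
    #(univ.filter fun T : Finset (Fin n) => #T = t ∧ ∀ i ∈ T, u i = 0) = (n - wt u).choose t := by
  have hzero : #(univ.filter fun i => u i = 0) = n - wt u := Nat.eq_sub_of_add_eq <| by
    simpa [wt] using card_filter_add_card_filter_not (s := univ) fun i => u i = 0
  rw [← hzero, ← card_powersetCard]
  congr 1
  ext T
  simp [mem_powersetCard, subset_iff, and_comm]

section Influence

variable {n : ℕ} (f : (Fin n → ZMod 2) → ZMod 2)

lemma influence_eq_one_sub_sum_walsh_sq (T : Finset (Fin n)) :
    influence f T = 1 - ∑ u ∈ univ.filter (fun u : Fin n → ZMod 2 => ∀ i ∈ T, u i = 0),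
      walsh f u ^ 2 := by
  rw [influence]
  congr 1
  simp only [autocorr_eq_sum_walsh_sq]
  rw [sum_comm]
  simp only [← mul_sum, sum_signChar_dotProduct_subcube, mul_ite, mul_zero]
  rw [← sum_filter, ← sum_mul]
  field_simp

lemma sum_influence (t : ℕ) :
    ∑ T ∈ univ.filter (fun T : Finset (Fin n) => #T = t), influence f T =
      n.choose t - ∑ u, walsh f u ^ 2 * (n - wt u).choose t := by
  simp only [influence_eq_one_sub_sum_walsh_sq, sum_sub_distrib, sum_const,
    card_filter_card_eq, nsmul_eq_mul, mul_one]
  rw [sum_comm' (t' := univ)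
    (s' := fun u => univ.filter fun T => #T = t ∧ ∀ i ∈ T, u i = 0) (by simp [and_comm])]
  simp only [sum_const, card_filter_card_eq_and_forall_eq_zero, nsmul_eq_mul, mul_comm]

lemma totalInf_eq_sum_walsh_sq {t : ℕ} (ht : t ≤ n) :
    totalInf f t = ∑ u, walsh f u ^ 2 * (1 - (n - wt u).choose t / n.choose t) := by
  have hC : (n.choose t : ℝ) ≠ 0 := by exact_mod_cast (Nat.choose_pos ht).ne'
  simp only [totalInf, sum_influence, mul_sub, mul_one, sum_sub_distrib, sum_walsh_sq,
    ← mul_div_assoc, ← sum_div]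
  field_simp

lemma walsh_zero : walsh f 0 = 1 - 2 * expectation f := by
  simp only [walsh_eq_sum_signChar, dotProduct_zero, add_zero, signChar_eq_one_sub_two_mul,
    sum_sub_distrib, ← mul_sum, sum_boole, expectation, sum_const, card_univ, card_cube]
  field_simp
  simp

lemma four_mul_variance_eq_sum_walsh_sq :
    4 * variance f = ∑ u ∈ univ.erase 0, walsh f u ^ 2 := by
  rw [← add_left_inj (walsh f 0 ^ 2), sum_erase_add _ _ (mem_univ 0), sum_walsh_sq, walsh_zero,
    variance]
  ring

end Influence

lemma choose_sub_mul_le {n k : ℕ} (t : ℕ) (hk : 1 ≤ k) :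
    (n - k).choose t * n ≤ n.choose t * (n - t) := by
  obtain _ | m := n
  · simp
  calc (m + 1 - k).choose t * (m + 1) ≤ m.choose t * (m + 1) := by gcongr; omega
    _ = (m + 1).choose t * (m + 1 - t) := Nat.choose_mul_succ_eq m t

lemma div_le_one_sub_choose_div {n k t : ℕ} (ht : t ≤ n) (hk : 1 ≤ k) :
    (t / n : ℝ) ≤ 1 - (n - k).choose t / n.choose t := by
  rcases Nat.eq_zero_or_pos n with rfl | hn
  · simp [Nat.le_zero.1 ht]
  have hnR : (0 : ℝ) < n := by exact_mod_cast hn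
  have hC : (0 : ℝ) < n.choose t := by exact_mod_cast Nat.choose_pos ht
  have key : ((n - k).choose t : ℝ) / n.choose t ≤ (n - t) / n := by
    rw [div_le_div_iff₀ hC hnR, ← Nat.cast_sub ht]
    exact_mod_cast (choose_sub_mul_le t hk).trans_eq (mul_comm _ _)
  have hsplit : (t / n : ℝ) = 1 - (n - t) / n := by field_simp; ring
  linarith

lemma totalInf_eq_sum_erase_zero {n t : ℕ} (f : (Fin n → ZMod 2) → ZMod 2) (ht : t ≤ n) :
    totalInf f t =
      ∑ u ∈ univ.erase 0, walsh f u ^ 2 * (1 - (n - wt u).choose t / n.choose t) := by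
  have hC : (n.choose t : ℝ) ≠ 0 := by exact_mod_cast (Nat.choose_pos ht).ne'
  rw [totalInf_eq_sum_walsh_sq f ht, ← sum_erase_add _ _ (mem_univ 0)]
  simp [wt_eq_zero_iff.2 rfl, hC]

/-- `t-inf(f) ≥ (4t/n) Var(f)`, with equality when `t = n`. -/
theorem totalInf_ge_var {n : ℕ} (f : (Fin n → ZMod 2) → ZMod 2) (t : ℕ)
    (h1 : 1 ≤ t) (h2 : t ≤ n) :
    totalInf f t ≥ (4 * t / n) * variance f ∧
      (t = n → totalInf f t = (4 * t / n) * variance f) := by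
  have hvar : 4 * t / n * variance f = ∑ u ∈ univ.erase 0, walsh f u ^ 2 * (t / n) := by
    rw [← sum_mul, ← four_mul_variance_eq_sum_walsh_sq]
    ring
  rw [totalInf_eq_sum_erase_zero f h2, hvar]
  refine ⟨sum_le_sum fun u hu => ?_, ?_⟩
  · exact mul_le_mul_of_nonneg_left
      (div_le_one_sub_choose_div h2 (one_le_wt (ne_of_mem_erase hu))) (sq_nonneg _)
  · rintro rfl
    refine sum_congr rfl fun u hu => ?_
    have hwt := one_le_wt (ne_of_mem_erase hu)
    have ht : (t : ℝ) ≠ 0 := Nat.cast_ne_zero.2 (by omega)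
    rw [Nat.choose_eq_zero_of_lt (by omega : t - wt u < t), div_self ht]
    simp

end BF
end

section
/- Let f be an n-variable Boolean function and t ∈ [n]. For α ∈ F_2^n let x_α = #{u ∈ F_2^n : f(u) = 1 and f(u ⊕ α) = 0} (so that x_α = n_α/(wt(α))! where n_α counts hypercube paths between supp(f) and its complement with endpoint difference α). Then t-inf(f) = 1 − (1 / (2^{n+t−2} · C(n,t))) Σ_{α ∈ F_2^n} C(n − wt(α), t − wt(α)) · (2^{n−2} − x_α), where C(n − wt(α), t − wt(α)) is taken to be 0 when wt(α) > t. -/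
/-!
Since `f u ≠ f (u + α)` holds for exactly `2 x_α` points `u` (the shift `u ↦ u + α` exchanges the
two kinds of disagreement), `C_f(α) = 1 - 4 x_α / 2^n`. Summing `inf_f(T)` over all `t`-sets `T`
and exchanging the order of summation, each `α` is counted once for every `T ⊇ supp α`, that is
`C(n - wt α, t - wt α)` times.
-/

open Finset

namespace BF

/-- `x_a`: the number of `u` with `f(u) = 1` and `f(u ⊕ a) = 0`. -/
def xcount {n : ℕ} (f : (Fin n → ZMod 2) → ZMod 2) (a : Fin n → ZMod 2) : ℕ :=
  (univ.filter fun u : Fin n → ZMod 2 => f u = 1 ∧ f (u + a) = 0).card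

theorem card_filter_card_eq_and_subset {α : Type*} [Fintype α] [DecidableEq α]
    (S : Finset α) (t : ℕ) :
    #{T : Finset α | #T = t ∧ S ⊆ T} =
      if #S ≤ t then (Fintype.card α - #S).choose (t - #S) else 0 := by
  split_ifs with hS
  · rw [← card_compl, ← card_powersetCard]
    refine card_nbij' (· \ S) (· ∪ S) ?_ ?_ ?_ ?_
    · intro T hT
      obtain ⟨rfl, hST⟩ := (mem_filter.1 hT).2
      simp [subset_compl_iff_disjoint_right, disjoint_sdiff_self_left, card_sdiff_of_subset hST]
    · intro U hU
      obtain ⟨hUS, hU⟩ := mem_powersetCard.1 hU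
      rw [subset_compl_iff_disjoint_right] at hUS
      simp [card_union_of_disjoint hUS, hU, Nat.sub_add_cancel hS]
    · intro T hT
      exact sdiff_union_of_subset (mem_filter.1 hT).2.2
    · intro U hU
      exact union_sdiff_cancel_right (subset_compl_iff_disjoint_right.1 (mem_powersetCard.1 hU).1)
  · rw [card_eq_zero, filter_eq_empty_iff]
    rintro T - ⟨rfl, hST⟩
    exact hS (card_le_card hST)

lemma neg_one_pow_val_add (u v : ZMod 2) :
    (-1 : ℝ) ^ (u + v).val =
      1 - 2 * ((if u = 1 ∧ v = 0 then 1 else 0) + (if v = 1 ∧ u = 0 then 1 else 0)) := by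
  obtain rfl | rfl : u = 0 ∨ u = 1 := by decide +revert
  all_goals obtain rfl | rfl : v = 0 ∨ v = 1 := by decide +revert
  all_goals simp only [add_zero, zero_add, show (1 + 1 : ZMod 2) = 0 from rfl]
  all_goals norm_num [ZMod.val_one]

theorem autocorr_eq_one_sub_xcount {n : ℕ} (f : (Fin n → ZMod 2) → ZMod 2) (a : Fin n → ZMod 2) :
    autocorr f a = 1 - 4 * xcount f a / 2 ^ n := by
  have hshift : ∀ x : Fin n → ZMod 2, x + a + a = x := fun x => by
    rw [add_assoc, ZModModule.add_self, add_zero]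
  have hswap : ∑ x : Fin n → ZMod 2, (if f (x + a) = 1 ∧ f x = 0 then (1 : ℝ) else 0) =
      ∑ x : Fin n → ZMod 2, if f x = 1 ∧ f (x + a) = 0 then 1 else 0 :=
    Fintype.sum_equiv (Equiv.addRight a) _ _ fun x => by simp [hshift, and_comm]
  have hx : ∑ x : Fin n → ZMod 2, (if f x = 1 ∧ f (x + a) = 0 then (1 : ℝ) else 0) =
      xcount f a := by
    rw [sum_boole, xcount]
  simp only [autocorr, neg_one_pow_val_add, sum_sub_distrib, ← mul_sum, sum_add_distrib, hswap, hx]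
  simp only [sum_const, card_univ, Fintype.card_pi, ZMod.card, prod_const, Fintype.card_fin,
    nsmul_eq_mul, Nat.cast_pow, Nat.cast_ofNat, mul_one]
  field_simp
  ring

theorem sum_card_eq_sum_supp_subset {n : ℕ} (t : ℕ) (g : (Fin n → ZMod 2) → ℝ) :
    ∑ T : Finset (Fin n) with #T = t, ∑ a : Fin n → ZMod 2 with ∀ i, a i ≠ 0 → i ∈ T, g a =
      ∑ a : Fin n → ZMod 2, (if wt a ≤ t then ((n - wt a).choose (t - wt a) : ℝ) else 0) * g a := by
  rw [sum_comm' (t' := univ) (s' := fun a => {T | #T = t ∧ ({i | a i ≠ 0} : Finset (Fin n)) ⊆ T})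
    (by simp [subset_iff, and_comm])]
  simp_rw [sum_const, nsmul_eq_mul, card_filter_card_eq_and_subset, wt, Fintype.card_fin]
  simp [apply_ite (Nat.cast (R := ℝ))]

theorem sum_influence_card_eq {n : ℕ} (f : (Fin n → ZMod 2) → ZMod 2) (t : ℕ) :
    ∑ T : Finset (Fin n) with #T = t, influence f T =
      n.choose t - (1 / 2 ^ t) * ∑ a : Fin n → ZMod 2,
        (if wt a ≤ t then ((n - wt a).choose (t - wt a) : ℝ) else 0) * autocorr f a := by
  have hinf : ∀ T ∈ ({T : Finset (Fin n) | #T = t} : Finset _), influence f T =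
      1 - (1 / 2 ^ t) * ∑ a : Fin n → ZMod 2 with ∀ i, a i ≠ 0 → i ∈ T, autocorr f a :=
    fun T hT => by rw [influence, (mem_filter.1 hT).2]
  rw [sum_congr rfl hinf, sum_sub_distrib, ← mul_sum, sum_card_eq_sum_supp_subset]
  simp [card_powersetCard]

theorem totalInf_path_expansion_general {n : ℕ} (f : (Fin n → ZMod 2) → ZMod 2) (t : ℕ)
    (h2 : t ≤ n) :
    totalInf f t = 1 - (1 / ((2 : ℝ) ^ ((n : ℤ) + t - 2) * (n.choose t : ℝ))) *
      ∑ a : Fin n → ZMod 2,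
        (if wt a ≤ t then (((n - wt a).choose (t - wt a) : ℕ) : ℝ) else 0) *
          ((2 : ℝ) ^ ((n : ℤ) - 2) - (xcount f a : ℝ)) := by
  have hchoose : (n.choose t : ℝ) ≠ 0 := Nat.cast_ne_zero.2 (Nat.choose_pos h2).ne'
  have hxcount : ∀ a, (2 : ℝ) ^ ((n : ℤ) - 2) - xcount f a = 2 ^ ((n : ℤ) - 2) * autocorr f a := by
    intro a
    rw [autocorr_eq_one_sub_xcount, zpow_sub₀ two_ne_zero, zpow_natCast]
    field_simp
    ring
  have hpow : (2 : ℝ) ^ ((n : ℤ) + t - 2) = 2 ^ ((n : ℤ) - 2) * 2 ^ t := by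
    rw [← zpow_natCast (2 : ℝ) t, ← zpow_add₀ two_ne_zero]
    ring_nf
  simp_rw [totalInf, sum_influence_card_eq, hxcount, mul_left_comm _ (2 ^ ((n : ℤ) - 2) : ℝ),
    ← mul_sum, hpow]
  field_simp

/-- the path-expansion formula for the total influence. -/
theorem totalInf_path_expansion {n : ℕ} (f : (Fin n → ZMod 2) → ZMod 2) (t : ℕ)
    (h1 : 1 ≤ t) (h2 : t ≤ n) :
    totalInf f t = 1 - (1 / ((2 : ℝ) ^ ((n : ℤ) + t - 2) * (n.choose t : ℝ))) *
      ∑ a : Fin n → ZMod 2,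
        (if wt a ≤ t then (((n - wt a).choose (t - wt a) : ℕ) : ℝ) else 0) *
          ((2 : ℝ) ^ ((n : ℤ) - 2) - (xcount f a : ℝ)) :=
  totalInf_path_expansion_general f t h2

end BF
end
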